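/- arXiv:2507.16031 — 7 statements merged into one kernel-verified Lean document; each statement's English description precedes it below -/
import Mathlib

section
/- Let Δ ≥ 0 and let V = (V_1, …, V_n) be a random vector whose law is a Δ-MRF distribution on Ω = Ω_1 × ⋯ × Ω_n. Then for every index i ∈ [n], every subset E_i ⊆ Ω_i, and every subset E_{-i} ⊆ ∏_{j≠i} Ω_j with Pr[V_{-i} ∈ E_{-i}] > 0, we have e^{-4Δ}·Pr[V_i ∈ E_i] ≤ Pr[V_i ∈ E_i | V_{-i} ∈ E_{-i}] ≤ e^{4Δ}·Pr[V_i ∈ E_i], where V_{-i} denotes the vector of coordinates of V other than i. -/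
/-- A Markov Random Field on `Ω = Ω 0 × ⋯ × Ω (n-1)`: a set of hyperedges,
vertex potentials, and edge potentials, where each edge potential depends only
on the coordinates in that edge. -/
structure MRF (n : ℕ) (Ω : Fin n → Type) [∀ i, Fintype (Ω i)] where
  edges : Finset (Finset (Fin n))
  vertexPot : ∀ i : Fin n, Ω i → ℝ
  edgePot : Finset (Fin n) → (∀ i, Ω i) → ℝ
  edgePot_local : ∀ e ∈ edges, ∀ u v : ∀ i, Ω i,
    (∀ i ∈ e, u i = v i) → edgePot e u = edgePot e v

namespace MRF

variable {n : ℕ} {Ω : Fin n → Type} [∀ i, Fintype (Ω i)]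

/-- The unnormalized Gibbs weight of a configuration. -/
noncomputable def weight (M : MRF n Ω) (u : ∀ i, Ω i) : ℝ :=
  Real.exp (∑ i, M.vertexPot i (u i) + ∑ e ∈ M.edges, M.edgePot e u)

/-- The probability distribution induced by the MRF: `Pr[V = u] ∝ weight u`. -/
noncomputable def dist (M : MRF n Ω) (u : ∀ i, Ω i) : ℝ :=
  M.weight u / ∑ v, M.weight v

/-- The maximum weighted degree of the MRF is at most `Δ`. -/
def DegreeLE (M : MRF n Ω) (Δ : ℝ) : Prop :=
  ∀ (i : Fin n) (u : ∀ i, Ω i),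
    |∑ e ∈ M.edges.filter (fun e => i ∈ e), M.edgePot e u| ≤ Δ

end MRF

/-- `D` is a `Δ`-MRF distribution. -/
def IsMRFDist {n : ℕ} {Ω : Fin n → Type} [∀ i, Fintype (Ω i)]
    (Δ : ℝ) (D : (∀ i, Ω i) → ℝ) : Prop :=
  ∃ M : MRF n Ω, M.DegreeLE Δ ∧ D = M.dist

/-!
Exchanging the `i`-th coordinates of two configurations `u, v` changes `D u * D v` by a
factor of at most `e^{4Δ}`: the vertex potentials are only permuted, edges avoiding `i`
see no change, and each of the four sums over edges through `i` lies in `[-Δ, Δ]`.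
The exchange is an involution on pairs, so summing it over `(Eᵢ ∩ E₋ᵢ) × Ω` and over
`Eᵢ × E₋ᵢ` gives `Pr[Eᵢ ∩ E₋ᵢ] ≤ e^{4Δ} Pr[E₋ᵢ] Pr[Eᵢ]` and
`Pr[Eᵢ] Pr[E₋ᵢ] ≤ e^{4Δ} Pr[Eᵢ ∩ E₋ᵢ]`, because `E₋ᵢ` ignores coordinate `i`.
-/

section SwapCoordinate

variable {ι : Type*} [DecidableEq ι] {Ω : ι → Type*}

def swapCoord (i : ι) (p : (∀ j, Ω j) × (∀ j, Ω j)) : (∀ j, Ω j) × (∀ j, Ω j) :=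
  (Function.update p.1 i (p.2 i), Function.update p.2 i (p.1 i))

theorem swapCoord_involutive (i : ι) : Function.Involutive (swapCoord (Ω := Ω) i) := by
  intro p
  simp only [swapCoord, Function.update_self, Function.update_idem, Function.update_eq_self]

theorem sum_apply_swapCoord [Fintype ι] (f : ∀ j, Ω j → ℝ) (i : ι)
    (p : (∀ j, Ω j) × (∀ j, Ω j)) :
    ∑ j, f j ((swapCoord i p).1 j) + ∑ j, f j ((swapCoord i p).2 j)
      = ∑ j, f j (p.1 j) + ∑ j, f j (p.2 j) := by
  rw [← Finset.sum_add_distrib, ← Finset.sum_add_distrib]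
  refine Finset.sum_congr rfl fun j _ => ?_
  rcases eq_or_ne j i with rfl | hj
  · simp only [swapCoord, Function.update_self]
    ring
  · simp only [swapCoord, Function.update_of_ne hj]

theorem sum_mul_sum_le_of_swapCoord (w : (∀ j, Ω j) → ℝ) (hw : ∀ u, 0 ≤ w u) {c : ℝ}
    (hc : 0 ≤ c) (i : ι)
    (hswap : ∀ p, w p.1 * w p.2 ≤ c * (w (swapCoord i p).1 * w (swapCoord i p).2))
    (A B A' B' : Finset (∀ j, Ω j))
    (hA : ∀ u ∈ A, ∀ v ∈ B, Function.update u i (v i) ∈ A')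
    (hB : ∀ u ∈ A, ∀ v ∈ B, Function.update v i (u i) ∈ B') :
    (∑ u ∈ A, w u) * (∑ v ∈ B, w v) ≤ c * ((∑ u ∈ A', w u) * (∑ v ∈ B', w v)) := by
  let swap : (∀ j, Ω j) × (∀ j, Ω j) ↪ _ := ⟨swapCoord i, (swapCoord_involutive i).injective⟩
  have hmaps : (A ×ˢ B).map swap ⊆ A' ×ˢ B' := by
    intro q hq
    obtain ⟨p, hp, rfl⟩ := Finset.mem_map.1 hq
    rw [Finset.mem_product] at hp ⊢
    exact ⟨hA _ hp.1 _ hp.2, hB _ hp.1 _ hp.2⟩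
  rw [Finset.sum_mul_sum, Finset.sum_mul_sum, ← Finset.sum_product', ← Finset.sum_product']
  calc ∑ p ∈ A ×ˢ B, w p.1 * w p.2
      ≤ c * ∑ p ∈ A ×ˢ B, w (swapCoord i p).1 * w (swapCoord i p).2 := by
        rw [Finset.mul_sum]
        exact Finset.sum_le_sum fun p _ => hswap p
    _ = c * ∑ q ∈ (A ×ˢ B).map swap, w q.1 * w q.2 := by
        rw [Finset.sum_map]
        rfl
    _ ≤ c * ∑ q ∈ A' ×ˢ B', w q.1 * w q.2 :=
        mul_le_mul_of_nonneg_left (Finset.sum_le_sum_of_subset_of_nonneg hmaps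
          fun q _ _ => mul_nonneg (hw _) (hw _)) hc

end SwapCoordinate

namespace MRF

variable {n : ℕ} {Ω : Fin n → Type} [∀ i, Fintype (Ω i)] (M : MRF n Ω)

theorem sum_edgePot_update_of_notMem (i : Fin n) (u : ∀ j, Ω j) (x : Ω i) :
    ∑ e ∈ M.edges.filter (fun e => i ∉ e), M.edgePot e (Function.update u i x)
      = ∑ e ∈ M.edges.filter (fun e => i ∉ e), M.edgePot e u := by
  refine Finset.sum_congr rfl fun e he => ?_
  rw [Finset.mem_filter] at he
  exact M.edgePot_local e he.1 _ _ fun j hj =>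
    Function.update_of_ne (fun h => he.2 (by rwa [h] at hj)) _ _

theorem weight_mul_weight_le_swapCoord {Δ : ℝ} (hdeg : M.DegreeLE Δ) (i : Fin n)
    (p : (∀ j, Ω j) × (∀ j, Ω j)) :
    M.weight p.1 * M.weight p.2
      ≤ Real.exp (4 * Δ) * (M.weight (swapCoord i p).1 * M.weight (swapCoord i p).2) := by
  simp only [weight, ← Real.exp_add, Real.exp_le_exp]
  have hsplit : ∀ u : ∀ j, Ω j, ∑ e ∈ M.edges, M.edgePot e u
      = ∑ e ∈ M.edges.filter (fun e => i ∈ e), M.edgePot e u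
        + ∑ e ∈ M.edges.filter (fun e => i ∉ e), M.edgePot e u :=
    fun u => (Finset.sum_filter_add_sum_filter_not _ _ _).symm
  have h₁ := abs_le.1 (hdeg i p.1)
  have h₂ := abs_le.1 (hdeg i p.2)
  have h₃ := abs_le.1 (hdeg i (swapCoord i p).1)
  have h₄ := abs_le.1 (hdeg i (swapCoord i p).2)
  have hvert := sum_apply_swapCoord M.vertexPot i p
  have hfar₁ := M.sum_edgePot_update_of_notMem i p.1 (p.2 i)
  have hfar₂ := M.sum_edgePot_update_of_notMem i p.2 (p.1 i)
  rw [hsplit p.1, hsplit p.2, hsplit (swapCoord i p).1, hsplit (swapCoord i p).2]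
  simp only [swapCoord] at *
  linarith

theorem dist_nonneg (u : ∀ i, Ω i) : 0 ≤ M.dist u :=
  div_nonneg (Real.exp_pos _).le (Finset.sum_nonneg fun _ _ => (Real.exp_pos _).le)

theorem sum_dist [Nonempty (∀ i, Ω i)] : ∑ u, M.dist u = 1 := by
  simp only [MRF.dist]
  rw [← Finset.sum_div]
  exact div_self (Finset.sum_pos (fun _ _ => Real.exp_pos _) Finset.univ_nonempty).ne'

theorem dist_mul_dist_le_swapCoord {Δ : ℝ} (hdeg : M.DegreeLE Δ) (i : Fin n)
    (p : (∀ j, Ω j) × (∀ j, Ω j)) :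
    M.dist p.1 * M.dist p.2
      ≤ Real.exp (4 * Δ) * (M.dist (swapCoord i p).1 * M.dist (swapCoord i p).2) := by
  simp only [MRF.dist]
  rw [div_mul_div_comm, div_mul_div_comm, ← mul_div_assoc]
  exact div_le_div_of_nonneg_right (M.weight_mul_weight_le_swapCoord hdeg i p)
    (mul_self_nonneg _)

end MRF

theorem mrf_conditioned_bound_general
    {n : ℕ} {Ω : Fin n → Type} [∀ i, Fintype (Ω i)]
    [∀ i, DecidableEq (Ω i)]
    (Δ : ℝ) (D : (∀ i, Ω i) → ℝ) (hD : IsMRFDist Δ D)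
    (i : Fin n) (Ei : Finset (Ω i)) (Emi : Finset (∀ j, Ω j))
    (hEmi : ∀ u v : ∀ j, Ω j, (∀ j, j ≠ i → u j = v j) → (u ∈ Emi ↔ v ∈ Emi))
    (hpos : 0 < ∑ u ∈ Emi, D u) :
    Real.exp (-(4 * Δ)) * (∑ u ∈ Finset.univ.filter (fun u => u i ∈ Ei), D u)
        ≤ (∑ u ∈ Emi.filter (fun u => u i ∈ Ei), D u) / (∑ u ∈ Emi, D u)
      ∧ (∑ u ∈ Emi.filter (fun u => u i ∈ Ei), D u) / (∑ u ∈ Emi, D u)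
        ≤ Real.exp (4 * Δ) * (∑ u ∈ Finset.univ.filter (fun u => u i ∈ Ei), D u) := by
  obtain ⟨M, hdeg, rfl⟩ := hD
  obtain ⟨u₀, -⟩ := Finset.nonempty_of_sum_ne_zero hpos.ne'
  have : Nonempty (∀ j, Ω j) := ⟨u₀⟩
  have hupdate : ∀ u x, Function.update u i x ∈ Emi ↔ u ∈ Emi := fun u x =>
    hEmi _ _ fun j hj => Function.update_of_ne hj _ _
  have key := sum_mul_sum_le_of_swapCoord M.dist M.dist_nonneg (Real.exp_pos (4 * Δ)).le i
    (M.dist_mul_dist_le_swapCoord hdeg i)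
  have hupper := key (Emi.filter (· i ∈ Ei)) .univ Emi (Finset.univ.filter (· i ∈ Ei))
    (fun u hu _ _ => (hupdate _ _).2 (Finset.mem_filter.1 hu).1)
    (fun u hu _ _ => by simpa using (Finset.mem_filter.1 hu).2)
  have hlower := key (Finset.univ.filter (· i ∈ Ei)) Emi .univ (Emi.filter (· i ∈ Ei))
    (fun _ _ _ _ => Finset.mem_univ _)
    (fun u hu v hv => Finset.mem_filter.2 ⟨(hupdate _ _).2 hv, by simpa using hu⟩)
  rw [M.sum_dist] at hupper hlower
  constructor
  · rw [Real.exp_neg, inv_mul_le_iff₀ (Real.exp_pos _), ← mul_div_assoc, le_div_iff₀ hpos]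
    linarith
  · rw [div_le_iff₀ hpos]
    linarith

/-- If `V ∼ D` for a `Δ`-MRF distribution `D`, then for any
coordinate `i`, any event `Ei` on coordinate `i`, and any event `Emi` not
depending on coordinate `i` with `Pr[V ∈ Emi] > 0`, we have
`e^{-4Δ}·Pr[Vᵢ ∈ Ei] ≤ Pr[Vᵢ ∈ Ei ∣ V ∈ Emi] ≤ e^{4Δ}·Pr[Vᵢ ∈ Ei]`. -/
theorem mrf_conditioned_bound
    {n : ℕ} {Ω : Fin n → Type} [∀ i, Fintype (Ω i)] [∀ i, Nonempty (Ω i)]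
    [∀ i, DecidableEq (Ω i)]
    (Δ : ℝ) (hΔ : 0 ≤ Δ) (D : (∀ i, Ω i) → ℝ) (hD : IsMRFDist Δ D)
    (i : Fin n) (Ei : Finset (Ω i)) (Emi : Finset (∀ j, Ω j))
    (hEmi : ∀ u v : ∀ j, Ω j, (∀ j, j ≠ i → u j = v j) → (u ∈ Emi ↔ v ∈ Emi))
    (hpos : 0 < ∑ u ∈ Emi, D u) :
    Real.exp (-(4 * Δ)) * (∑ u ∈ Finset.univ.filter (fun u => u i ∈ Ei), D u)
        ≤ (∑ u ∈ Emi.filter (fun u => u i ∈ Ei), D u) / (∑ u ∈ Emi, D u)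
      ∧ (∑ u ∈ Emi.filter (fun u => u i ∈ Ei), D u) / (∑ u ∈ Emi, D u)
        ≤ Real.exp (4 * Δ) * (∑ u ∈ Finset.univ.filter (fun u => u i ∈ Ei), D u) :=
  mrf_conditioned_bound_general Δ D hD i Ei Emi hEmi hpos
end

section
/- Let X = (X_1, …, X_n) be a random vector on Ω = Ω_1 × ⋯ × Ω_n whose law is a time-dependent Markov chain: for every ω ∈ Ω and every 2 ≤ i ≤ n with Pr[X_1 = ω_1, …, X_{i-1} = ω_{i-1}] > 0, one has Pr[X_i = ω_i | X_j = ω_j for all j < i] = Pr[X_i = ω_i | X_{i-1} = ω_{i-1}]. Then for every ε ∈ (0,1), setting Δ := 2·log(n·(max_{i∈[n]} |Ω_i|)/ε), there exists a Δ-MRF distribution D_M on Ω such that Pr_{Y ∼ D_M}[Y = ω] ≥ (1 - ε)·Pr[X = ω] for every ω ∈ Ω. -/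
open Finset Function

theorem sum_sum_update_eq_card_smul {ι : Type*} [Fintype ι] [DecidableEq ι] {Ω : ι → Type*}
    [∀ i, Fintype (Ω i)] {M : Type*} [AddCommMonoid M] (a : ι) (H : (∀ i, Ω i) → M) :
    ∑ u, ∑ b, H (update u a b) = Fintype.card (Ω a) • ∑ u, H u := by
  let e := Equiv.piSplitAt a Ω
  have hupdate : ∀ u b, update u a b = e.symm (b, (e u).2) := fun u b =>
    e.injective (Prod.ext (by simp [e]) (funext fun j => by simp [e, update_of_ne j.2]))
  calc ∑ u, ∑ b, H (update u a b)
      = ∑ p : Ω a × _, ∑ b, H (e.symm (b, p.2)) := by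
        rw [← e.sum_comp]; simp only [hupdate]
    _ = Fintype.card (Ω a) • ∑ p : Ω a × _, H (e.symm p) := by
        simp only [Fintype.sum_prod_type, sum_const, card_univ]
        rw [sum_comm]
    _ = Fintype.card (Ω a) • ∑ u, H u := by rw [e.symm.sum_comp]

theorem sum_prod_le_prod_of_sum_update_le {ι : Type*} [Fintype ι] [LinearOrder ι]
    {Ω : ι → Type*} [∀ i, Fintype (Ω i)] [∀ i, Nonempty (Ω i)]
    (f : ι → (∀ i, Ω i) → ℝ) (c : ι → ℝ) (hf0 : ∀ i u, 0 ≤ f i u)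
    (hf_update : ∀ i j u b, i < j → f i (update u j b) = f i u)
    (hfc : ∀ i u, ∑ b, f i (update u i b) ≤ c i) :
    ∑ u, ∏ i, f i u ≤ ∏ i, c i := by
  suffices h : ∀ s : Finset ι,
      ∑ u, ∏ i ∈ s, f i u ≤ (∏ i ∈ s, c i) * ∏ i ∈ sᶜ, (Fintype.card (Ω i) : ℝ) by
    simpa using h univ
  intro s
  induction s using Finset.induction_on_max with
  | empty => simp [Fintype.card_pi]
  | insert a s hlt ih =>
    have ha : a ∉ s := fun h => (hlt a h).false
    have hca : 0 ≤ c a := (sum_nonneg fun _ _ => hf0 a _).trans (hfc a (Classical.arbitrary _))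
    have hcard : (0 : ℝ) < Fintype.card (Ω a) := by exact_mod_cast Fintype.card_pos
    have hprod_update : ∀ u b, ∏ i ∈ s, f i (update u a b) = ∏ i ∈ s, f i u := fun u b =>
      prod_congr rfl fun i hi => hf_update i a u b (hlt i hi)
    refine le_of_mul_le_mul_left ?_ hcard
    calc (Fintype.card (Ω a) : ℝ) * ∑ u, ∏ i ∈ insert a s, f i u
        = ∑ u, (∑ b, f a (update u a b)) * ∏ i ∈ s, f i u := by
          rw [← nsmul_eq_mul, ← sum_sum_update_eq_card_smul a]
          simp only [prod_insert ha, hprod_update, sum_mul]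
      _ ≤ ∑ u, c a * ∏ i ∈ s, f i u :=
          sum_le_sum fun u _ =>
            mul_le_mul_of_nonneg_right (hfc a u) (prod_nonneg fun i _ => hf0 i u)
      _ ≤ c a * ((∏ i ∈ s, c i) * ∏ i ∈ sᶜ, (Fintype.card (Ω i) : ℝ)) := by
          rw [← mul_sum]; exact mul_le_mul_of_nonneg_left ih hca
      _ = Fintype.card (Ω a) * ((∏ i ∈ insert a s, c i) *
            ∏ i ∈ (insert a s)ᶜ, (Fintype.card (Ω i) : ℝ)) := by
          rw [prod_insert ha, compl_insert, ← mul_prod_erase sᶜ _ (mem_compl.2 ha)]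
          ring

section SumIte

variable {α : Type*} [Fintype α] {D : α → ℝ}

theorem sum_ite_nonneg (hD0 : ∀ u, 0 ≤ D u) (p : α → Prop) [DecidablePred p] :
    0 ≤ ∑ u, if p u then D u else 0 :=
  sum_nonneg fun u _ => ite_nonneg (hD0 u) le_rfl

theorem sum_ite_mono (hD0 : ∀ u, 0 ≤ D u) {p q : α → Prop} [DecidablePred p] [DecidablePred q]
    (h : ∀ u, p u → q u) :
    (∑ u, if p u then D u else 0) ≤ ∑ u, if q u then D u else 0 :=
  sum_le_sum fun u _ => by
    by_cases hp : p u
    · simp [hp, h u hp]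
    · simp only [hp, if_false]; exact ite_nonneg (hD0 u) le_rfl

end SumIte

theorem abs_log_max_le_log_inv {x δ : ℝ} (hδ0 : 0 < δ) (hδ1 : δ ≤ 1) (hx : x ≤ 1) :
    |Real.log (max x δ)| ≤ Real.log δ⁻¹ := by
  have hpos : 0 < max x δ := lt_max_of_lt_right hδ0
  rw [abs_of_nonpos (Real.log_nonpos hpos.le (max_le hx hδ1)), Real.log_inv, neg_le_neg_iff]
  exact Real.log_le_log hδ0 (le_max_right _ _)

namespace MRF

variable {n : ℕ} {Ω : Fin n → Type} [∀ i, Fintype (Ω i)]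

theorem weight_pos (M : MRF n Ω) (u : ∀ i, Ω i) : 0 < M.weight u := Real.exp_pos _

theorem one_sub_mul_le_dist (M : MRF n Ω) (u : ∀ i, Ω i) {a ε : ℝ} (ha0 : 0 ≤ a)
    (ha : a ≤ M.weight u) (hZ : ∑ v, M.weight v ≤ Real.exp ε) :
    (1 - ε) * a ≤ M.dist u := by
  have hZpos : 0 < ∑ v, M.weight v :=
    (M.weight_pos u).trans_le (single_le_sum (fun v _ => (M.weight_pos v).le) (mem_univ u))
  calc (1 - ε) * a ≤ Real.exp (-ε) * a := by
        gcongr; linarith [Real.add_one_le_exp (-ε)]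
    _ = a / Real.exp ε := by rw [Real.exp_neg, div_eq_inv_mul]
    _ ≤ a / ∑ v, M.weight v := div_le_div_of_nonneg_left ha0 hZpos hZ
    _ ≤ M.dist u := div_le_div_of_nonneg_right ha hZpos.le

end MRF

namespace Fin

/-- `prev 0 = 0`, so `chainEdge 0 = {0}` is the edge carrying the law of the first coordinate. -/
def prev {n : ℕ} (k : Fin n) : Fin n := ⟨k - 1, by omega⟩

end Fin

section ChainMRF

variable {n : ℕ} {Ω : Fin n → Type} [∀ i, Fintype (Ω i)]

def chainEdge (k : Fin n) : Finset (Fin n) := {k.prev, k}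

theorem card_filter_mem_chainEdge_le_two (i : Fin n) : #{k | i ∈ chainEdge k} ≤ 2 := by
  have hmaps : ∀ k ∈ ({k | i ∈ chainEdge k} : Finset (Fin n)),
      (k : ℕ) ∈ ({(i : ℕ), (i : ℕ) + 1} : Finset ℕ) := by
    intro k hk
    simp only [chainEdge, Fin.prev, mem_filter, mem_univ, true_and, mem_insert, mem_singleton,
      Fin.ext_iff] at hk ⊢
    omega
  exact (card_le_card_of_injOn _ hmaps Fin.val_injective.injOn).trans card_le_two

noncomputable def chainMRF (g : Fin n → (∀ i, Ω i) → ℝ)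
    (hg : ∀ k u v, u k.prev = v k.prev → u k = v k → g k u = g k v) : MRF n Ω where
  edges := univ.image chainEdge
  vertexPot _ _ := 0
  edgePot e u := ∑ k with chainEdge k = e, Real.log (g k u)
  edgePot_local e _ u v huv := sum_congr rfl fun k hk => by
    rw [(mem_filter.1 hk).2.symm] at huv
    rw [hg k u v (huv _ (by simp [chainEdge])) (huv _ (by simp [chainEdge]))]

variable (g : Fin n → (∀ i, Ω i) → ℝ)
  (hg : ∀ k u v, u k.prev = v k.prev → u k = v k → g k u = g k v)

theorem chainMRF_weight (hg0 : ∀ k u, 0 < g k u) (u : ∀ i, Ω i) :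
    (chainMRF g hg).weight u = ∏ k, g k u := by
  simp only [MRF.weight, chainMRF, sum_const_zero, zero_add]
  rw [sum_fiberwise_eq_sum_filter, filter_true_of_mem fun k _ => mem_image_of_mem _ (mem_univ k),
    Real.exp_sum]
  exact prod_congr rfl fun k _ => Real.exp_log (hg0 k u)

theorem chainMRF_degreeLE {B : ℝ} (hB : ∀ k u, |Real.log (g k u)| ≤ B) :
    (chainMRF g hg).DegreeLE (2 * B) := by
  intro i u
  have hsum : ∑ e ∈ (chainMRF g hg).edges with i ∈ e, (chainMRF g hg).edgePot e u
      = ∑ k with i ∈ chainEdge k, Real.log (g k u) := by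
    simp only [chainMRF]
    rw [sum_fiberwise_eq_sum_filter]
    simp
  rw [hsum]
  calc |∑ k with i ∈ chainEdge k, Real.log (g k u)|
      ≤ ∑ k with i ∈ chainEdge k, |Real.log (g k u)| := abs_sum_le_sum_abs _ _
    _ ≤ #{k | i ∈ chainEdge k} • B := sum_le_card_nsmul _ _ _ fun k _ => hB k u
    _ ≤ 2 * B := by
        rw [nsmul_eq_mul]
        gcongr
        · exact (abs_nonneg _).trans (hB i u)
        · exact_mod_cast card_filter_mem_chainEdge_le_two i

end ChainMRF

section MarkovChain

variable {n : ℕ} {Ω : Fin n → Type} [∀ i, Fintype (Ω i)] [∀ i, DecidableEq (Ω i)]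
  (D : (∀ i, Ω i) → ℝ)

def IsMarkovChain : Prop :=
  ∀ (ω : ∀ i, Ω i) (i j : Fin n), (j : ℕ) + 1 = (i : ℕ) →
    0 < (∑ u, if ∀ k, k < i → u k = ω k then D u else 0) →
    (∑ u, if u i = ω i ∧ ∀ k, k < i → u k = ω k then D u else 0) /
        (∑ u, if ∀ k, k < i → u k = ω k then D u else 0)
      = (∑ u, if u i = ω i ∧ u j = ω j then D u else 0) /
        (∑ u, if u j = ω j then D u else 0)

noncomputable def marginal (i : Fin n) (a : Ω i) : ℝ := ∑ u, if u i = a then D u else 0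

/-- `Pr[Xᵢ = b | Xⱼ = a]`; it is `0` when `Pr[Xⱼ = a] = 0`. -/
noncomputable def condProb (j i : Fin n) (a : Ω j) (b : Ω i) : ℝ :=
  (∑ u, if u i = b ∧ u j = a then D u else 0) / marginal D j a

noncomputable def transition (k : Fin n) (u : ∀ i, Ω i) : ℝ :=
  if (k : ℕ) = 0 then marginal D k (u k) else condProb D k.prev k (u k.prev) (u k)

noncomputable def prefixProb (m : ℕ) (ω : ∀ i, Ω i) : ℝ :=
  ∑ u, if ∀ k : Fin n, (k : ℕ) < m → u k = ω k then D u else 0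

variable {D}

theorem sum_marginal (hD1 : ∑ u, D u = 1) (i : Fin n) : ∑ a, marginal D i a = 1 := by
  simp only [marginal]
  rw [sum_comm]
  simp [hD1]

theorem marginal_le_one (hD0 : ∀ u, 0 ≤ D u) (hD1 : ∑ u, D u = 1) (i : Fin n) (a : Ω i) :
    marginal D i a ≤ 1 :=
  (single_le_sum (fun _ _ => sum_ite_nonneg hD0 _) (mem_univ a)).trans (sum_marginal hD1 i).le

theorem condProb_nonneg (hD0 : ∀ u, 0 ≤ D u) (j i : Fin n) (a : Ω j) (b : Ω i) :
    0 ≤ condProb D j i a b :=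
  div_nonneg (sum_ite_nonneg hD0 _) (sum_ite_nonneg hD0 _)

theorem condProb_le_one (hD0 : ∀ u, 0 ≤ D u) (j i : Fin n) (a : Ω j) (b : Ω i) :
    condProb D j i a b ≤ 1 :=
  div_le_one_of_le₀ (sum_ite_mono hD0 fun _ h => h.2) (sum_ite_nonneg hD0 _)

theorem sum_condProb_le_one (j i : Fin n) (a : Ω j) : ∑ b, condProb D j i a b ≤ 1 := by
  have hsum : ∑ b, (∑ u, if u i = b ∧ u j = a then D u else 0) = marginal D j a := by
    rw [sum_comm]
    refine sum_congr rfl fun u _ => ?_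
    by_cases h : u j = a <;> simp [h]
  simp only [condProb]
  rw [← sum_div, hsum]
  exact div_self_le_one _

theorem transition_nonneg (hD0 : ∀ u, 0 ≤ D u) (k : Fin n) (u : ∀ i, Ω i) :
    0 ≤ transition D k u := by
  unfold transition
  split_ifs
  exacts [sum_ite_nonneg hD0 _, condProb_nonneg hD0 _ _ _ _]

theorem transition_le_one (hD0 : ∀ u, 0 ≤ D u) (hD1 : ∑ u, D u = 1) (k : Fin n)
    (u : ∀ i, Ω i) : transition D k u ≤ 1 := by
  unfold transition
  split_ifs
  exacts [marginal_le_one hD0 hD1 _ _, condProb_le_one hD0 _ _ _ _]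

theorem transition_congr (k : Fin n) {u v : ∀ i, Ω i} (hprev : u k.prev = v k.prev)
    (hk : u k = v k) : transition D k u = transition D k v := by
  simp only [transition, hprev, hk]

theorem transition_update_of_lt {k j : Fin n} (hkj : k < j) (u : ∀ i, Ω i) (b : Ω j) :
    transition D k (update u j b) = transition D k u := by
  have hprev : k.prev ≠ j := by
    rw [Fin.lt_def] at hkj
    simp [Fin.ext_iff, Fin.prev]
    omega
  exact transition_congr k (update_of_ne hprev ..) (update_of_ne hkj.ne ..)

theorem sum_transition_update_le_one (hD1 : ∑ u, D u = 1) (k : Fin n) (u : ∀ i, Ω i) :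
    ∑ b, transition D k (update u k b) ≤ 1 := by
  unfold transition
  split_ifs with hk
  · simp [sum_marginal hD1]
  · have hprev : k.prev ≠ k := by simp [Fin.ext_iff, Fin.prev]; omega
    simpa [update_of_ne hprev] using sum_condProb_le_one k.prev k (u k.prev)

theorem prefixProb_zero (hD1 : ∑ u, D u = 1) (ω : ∀ i, Ω i) : prefixProb D 0 ω = 1 := by
  simp [prefixProb, hD1]

theorem prefixProb_succ (m : ℕ) (hm : m < n) (ω : ∀ i, Ω i) :
    prefixProb D (m + 1) ω
      = ∑ u, if u ⟨m, hm⟩ = ω ⟨m, hm⟩ ∧ ∀ k, k < (⟨m, hm⟩ : Fin n) → u k = ω k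
          then D u else 0 := by
  refine sum_congr rfl fun u _ => if_congr ⟨fun h => ⟨h _ m.lt_succ_self, fun k hk => h k
    (Nat.lt_succ_of_lt hk)⟩, fun h k hk => ?_⟩ rfl rfl
  rcases Nat.lt_succ_iff_lt_or_eq.1 hk with hk | hk
  · exact h.2 k hk
  · obtain rfl : k = ⟨m, hm⟩ := Fin.ext hk
    exact h.1

theorem prefixProb_succ_le (hD0 : ∀ u, 0 ≤ D u) (hD1 : ∑ u, D u = 1) (hD : IsMarkovChain D)
    (m : ℕ) (hm : m < n) (ω : ∀ i, Ω i) :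
    prefixProb D (m + 1) ω ≤ transition D ⟨m, hm⟩ ω * prefixProb D m ω := by
  cases m with
  | zero =>
    rw [prefixProb_zero hD1, mul_one, prefixProb_succ 0 hm]
    simp [transition, marginal, Fin.lt_def]
  | succ m =>
    set i : Fin n := ⟨m + 1, hm⟩
    set j : Fin n := ⟨m, by omega⟩
    have htrans : transition D i ω = condProb D j i (ω j) (ω i) := by
      simp [transition, i, j, Fin.prev]
    have hnonneg : 0 ≤ ∑ u, if ∀ k, k < i → u k = ω k then D u else 0 := sum_ite_nonneg hD0 _
    rcases hnonneg.eq_or_lt with h0 | hpos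
    · have hmono : prefixProb D (m + 2) ω ≤ prefixProb D (m + 1) ω :=
        sum_ite_mono hD0 fun u h k hk => h k (Nat.lt_succ_of_lt hk)
      have hzero : prefixProb D (m + 1) ω = 0 := h0.symm
      exact hmono.trans_eq (by rw [hzero, mul_zero])
    · have hmarkov := hD ω i j rfl hpos
      rw [div_eq_iff hpos.ne'] at hmarkov
      rw [prefixProb_succ (m + 1) hm, htrans]
      exact hmarkov.le

theorem prefixProb_le_prod (hD0 : ∀ u, 0 ≤ D u) (hD1 : ∑ u, D u = 1) (hD : IsMarkovChain D)
    (ω : ∀ i, Ω i) (m : ℕ) (hm : m ≤ n) :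
    prefixProb D m ω ≤ ∏ k : Fin m, transition D (Fin.castLE hm k) ω := by
  induction m with
  | zero => simp [prefixProb_zero hD1]
  | succ m ih =>
    rw [Fin.prod_univ_castSucc, mul_comm]
    exact (prefixProb_succ_le hD0 hD1 hD m hm ω).trans
      (mul_le_mul_of_nonneg_left (ih (by omega)) (transition_nonneg hD0 _ _))

theorem le_prod_transition (hD0 : ∀ u, 0 ≤ D u) (hD1 : ∑ u, D u = 1) (hD : IsMarkovChain D)
    (ω : ∀ i, Ω i) : D ω ≤ ∏ k, transition D k ω := by
  have h := prefixProb_le_prod hD0 hD1 hD ω n le_rfl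
  have hfull : prefixProb D n ω = D ω := by
    simp [prefixProb, ← funext_iff]
  simpa [hfull] using h

theorem sum_prod_max_transition_le [∀ i, Nonempty (Ω i)] (hD0 : ∀ u, 0 ≤ D u)
    (hD1 : ∑ u, D u = 1) {δ : ℝ} (hδ : 0 ≤ δ) :
    ∑ u, ∏ k, max (transition D k u) δ ≤ Real.exp (δ * ∑ k, (Fintype.card (Ω k) : ℝ)) := by
  have hrow : ∀ k u, ∑ b, max (transition D k (update u k b)) δ ≤ 1 + δ * Fintype.card (Ω k) :=
    fun k u => calc
      ∑ b, max (transition D k (update u k b)) δ ≤ ∑ b, (transition D k (update u k b) + δ) :=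
        sum_le_sum fun b _ =>
          max_le (le_add_of_nonneg_right hδ) (le_add_of_nonneg_left (transition_nonneg hD0 _ _))
      _ = ∑ b, transition D k (update u k b) + δ * Fintype.card (Ω k) := by
        rw [sum_add_distrib, sum_const, card_univ, nsmul_eq_mul, mul_comm]
      _ ≤ 1 + δ * Fintype.card (Ω k) := by
        gcongr; exact sum_transition_update_le_one hD1 k u
  calc ∑ u, ∏ k, max (transition D k u) δ ≤ ∏ k, (1 + δ * Fintype.card (Ω k)) :=
        sum_prod_le_prod_of_sum_update_le _ _
          (fun k u => (transition_nonneg hD0 k u).trans (le_max_left _ _))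
          (fun k j u b hkj => by simp only [transition_update_of_lt hkj]) hrow
    _ ≤ Real.exp (∑ k, δ * Fintype.card (Ω k)) :=
        Real.prod_one_add_le_exp_sum _ fun k => by positivity
    _ = Real.exp (δ * ∑ k, (Fintype.card (Ω k) : ℝ)) := by rw [mul_sum]

end MarkovChain

/-- Any time-dependent Markov chain `X ∼ D` on a finite product
space can be approximated by a `Δ`-MRF distribution `D'` with
`Δ = 2·log(n · maxᵢ|Ωᵢ| / ε)` so that `D'(ω) ≥ (1-ε)·D(ω)` for all `ω`.
The Markov property is stated as: for all `ω` and consecutive indices `j, i`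
(with `(j:ℕ)+1 = (i:ℕ)`, so `i` is at least the second index), if the prefix
event `{∀ k < i, X k = ω k}` has positive probability, then
`Pr[Xᵢ = ωᵢ ∣ ∀ k < i, X_k = ω_k] = Pr[Xᵢ = ωᵢ ∣ X_j = ω_j]`. -/
theorem markov_chain_to_mrf
    {n : ℕ} (hn : 1 ≤ n) {Ω : Fin n → Type}
    [∀ i, Fintype (Ω i)] [∀ i, Nonempty (Ω i)] [∀ i, DecidableEq (Ω i)]
    (D : (∀ i, Ω i) → ℝ) (hD0 : ∀ u, 0 ≤ D u) (hD1 : ∑ u, D u = 1)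
    (hmarkov : ∀ (ω : ∀ i, Ω i) (i j : Fin n), (j : ℕ) + 1 = (i : ℕ) →
      0 < (∑ u, if ∀ k, k < i → u k = ω k then D u else 0) →
      (∑ u, if u i = ω i ∧ ∀ k, k < i → u k = ω k then D u else 0) /
          (∑ u, if ∀ k, k < i → u k = ω k then D u else 0)
        = (∑ u, if u i = ω i ∧ u j = ω j then D u else 0) /
          (∑ u, if u j = ω j then D u else 0))
    (ε : ℝ) (hε0 : 0 < ε) (hε1 : ε < 1) :
    ∃ D' : (∀ i, Ω i) → ℝ,
      IsMRFDist
        (2 * Real.log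
          ((n * ((Finset.univ.sup fun i => Fintype.card (Ω i)) : ℕ) : ℝ) / ε)) D' ∧
      ∀ ω, (1 - ε) * D ω ≤ D' ω := by
  set q := univ.sup fun i => Fintype.card (Ω i)
  have hcard : ∀ i, Fintype.card (Ω i) ≤ q := fun i =>
    le_sup (f := fun i => Fintype.card (Ω i)) (mem_univ i)
  have hnq : (1 : ℝ) ≤ n * q := by
    exact_mod_cast Nat.mul_le_mul hn (Fintype.card_pos.trans_le (hcard ⟨0, hn⟩))
  set δ := ε / (n * q)
  have hδ0 : 0 < δ := div_pos hε0 (by linarith)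
  have hδ1 : δ ≤ 1 := div_le_one_of_le₀ (by linarith) (by linarith)
  let g : Fin n → (∀ i, Ω i) → ℝ := fun k u => max (transition D k u) δ
  have hg : ∀ k u v, u k.prev = v k.prev → u k = v k → g k u = g k v :=
    fun k u v hprev hk => by simp only [g, transition_congr k hprev hk]
  have hweight := chainMRF_weight g hg fun k u => lt_max_of_lt_right hδ0
  refine ⟨(chainMRF g hg).dist, ⟨chainMRF g hg, ?_, rfl⟩, fun ω => ?_⟩
  · rw [← inv_div]
    exact chainMRF_degreeLE g hg fun k u =>
      abs_log_max_le_log_inv hδ0 hδ1 (transition_le_one hD0 hD1 k u)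
  refine (chainMRF g hg).one_sub_mul_le_dist ω (hD0 ω) ?_ ?_
  · rw [hweight]
    exact (le_prod_transition hD0 hD1 hmarkov ω).trans
      (prod_le_prod (fun k _ => transition_nonneg hD0 k ω) fun k _ => le_max_left _ _)
  · simp only [hweight]
    refine (sum_prod_max_transition_le hD0 hD1 hδ0.le).trans (Real.exp_le_exp.2 ?_)
    have hsum : ∑ k, (Fintype.card (Ω k) : ℝ) ≤ n * q := by
      simpa using sum_le_card_nsmul univ _ _ fun k _ => (Nat.cast_le.2 (hcard k) : (_ : ℝ) ≤ q)
    calc δ * ∑ k, (Fintype.card (Ω k) : ℝ) ≤ δ * (n * q) := by gcongr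
      _ = ε := div_mul_cancel₀ ε (by linarith)
end

section
/- Let Ω be a finite set, let D and D' be probability distributions on Ω, and let ALG, OPT : Ω → ℝ be functions with 0 ≤ OPT(ω) ≤ ALG(ω) and OPT(ω) ≤ C for all ω ∈ Ω, where C > 0. Let α ≥ 1 and assume E_{ω∼D}[ALG(ω)] ≥ α·E_{ω∼D}[OPT(ω)] and E_{ω∼D}[OPT(ω)] > 0. Set ε := E_{ω∼D}[OPT(ω)]/(2C) and assume D'(ω) ≥ (1 - ε)·D(ω) for all ω ∈ Ω. Then E_{ω∼D'}[ALG(ω)] ≥ (α/2)·E_{ω∼D'}[OPT(ω)]. -/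
/-! If `D' ≥ (1 - ε) D` pointwise, then `D'` keeps a `(1 - ε)` fraction of `E_D[ALG]`, while the
remaining mass `ε` of `D'` can add at most `ε C = E_D[OPT] / 2` to the expectation of `OPT ≤ C`.
Since `E_D[OPT] ≤ C` forces `ε ≤ 1/2`, both sides change by at most a factor of two. -/

open Finset

section WeightedSums

variable {Ω : Type*} [Fintype Ω] {w w' f : Ω → ℝ} {c C : ℝ}

theorem sum_mul_le_of_le_of_sum_eq_one (hw : ∀ ω, 0 ≤ w ω) (hw1 : ∑ ω, w ω = 1)
    (hf : ∀ ω, f ω ≤ C) : ∑ ω, w ω * f ω ≤ C :=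
  calc ∑ ω, w ω * f ω ≤ ∑ ω, w ω * C :=
        sum_le_sum fun ω _ => mul_le_mul_of_nonneg_left (hf ω) (hw ω)
    _ = C := by rw [← sum_mul, hw1, one_mul]

theorem mul_sum_mul_le_sum_mul_of_mul_le (hww' : ∀ ω, c * w ω ≤ w' ω) (hf : ∀ ω, 0 ≤ f ω) :
    c * ∑ ω, w ω * f ω ≤ ∑ ω, w' ω * f ω := by
  rw [mul_sum]
  exact sum_le_sum fun ω _ => by
    rw [← mul_assoc]
    exact mul_le_mul_of_nonneg_right (hww' ω) (hf ω)

theorem sum_mul_le_mul_sum_mul_add_of_mul_le (hww' : ∀ ω, c * w ω ≤ w' ω)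
    (hw1 : ∑ ω, w ω = 1) (hw'1 : ∑ ω, w' ω = 1) (hf : ∀ ω, f ω ≤ C) :
    ∑ ω, w' ω * f ω ≤ c * ∑ ω, w ω * f ω + (1 - c) * C := by
  have hexcess : ∑ ω, (w' ω - c * w ω) = 1 - c := by
    rw [sum_sub_distrib, ← mul_sum, hw1, hw'1, mul_one]
  calc ∑ ω, w' ω * f ω = c * ∑ ω, w ω * f ω + ∑ ω, (w' ω - c * w ω) * f ω := by
        rw [mul_sum, ← sum_add_distrib]
        exact sum_congr rfl fun ω _ => by ring
    _ ≤ c * ∑ ω, w ω * f ω + ∑ ω, (w' ω - c * w ω) * C := by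
        gcongr with ω
        exacts [sub_nonneg.mpr (hww' ω), hf ω]
    _ = c * ∑ ω, w ω * f ω + (1 - c) * C := by rw [← sum_mul, hexcess]

end WeightedSums

theorem distribution_transfer_general
    {Ω : Type} [Fintype Ω]
    (D D' : Ω → ℝ)
    (hD0 : ∀ ω, 0 ≤ D ω) (hD1 : ∑ ω, D ω = 1)
    (hD'1 : ∑ ω, D' ω = 1)
    (ALG OPT : Ω → ℝ) (C : ℝ) (hC : 0 < C)
    (hOPT0 : ∀ ω, 0 ≤ OPT ω)
    (hOPTALG : ∀ ω, OPT ω ≤ ALG ω)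
    (hOPTC : ∀ ω, OPT ω ≤ C)
    (α : ℝ) (hα : 1 ≤ α)
    (hhard : (∑ ω, D ω * ALG ω) ≥ α * ∑ ω, D ω * OPT ω)
    (hclose : ∀ ω, D' ω ≥ (1 - (∑ ω', D ω' * OPT ω') / (2 * C)) * D ω) :
    (∑ ω, D' ω * ALG ω) ≥ (α / 2) * ∑ ω, D' ω * OPT ω := by
  set μ := ∑ ω, D ω * OPT ω
  set ε := μ / (2 * C)
  have hμ0 : 0 ≤ μ := sum_nonneg fun ω _ => mul_nonneg (hD0 ω) (hOPT0 ω)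
  have hμC : μ ≤ C := sum_mul_le_of_le_of_sum_eq_one hD0 hD1 hOPTC
  have hεC : ε * C = μ / 2 := by
    change μ / (2 * C) * C = μ / 2
    field_simp
  have hε : ε ≤ 1 / 2 := by rw [div_le_iff₀ (by positivity)]; linarith
  have hALG : (1 - ε) * (α * μ) ≤ ∑ ω, D' ω * ALG ω :=
    (mul_le_mul_of_nonneg_left hhard (by linarith)).trans
      (mul_sum_mul_le_sum_mul_of_mul_le hclose fun ω => (hOPT0 ω).trans (hOPTALG ω))
  have hOPT : ∑ ω, D' ω * OPT ω ≤ (1 - ε) * μ + μ / 2 := by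
    have := sum_mul_le_mul_sum_mul_add_of_mul_le hclose hD1 hD'1 hOPTC
    rwa [sub_sub_cancel, hεC] at this
  linarith [mul_le_mul_of_nonneg_left hOPT (by linarith : 0 ≤ α / 2),
    mul_nonneg (mul_nonneg (by linarith : 0 ≤ α) hμ0) (by linarith : 0 ≤ 1 / 2 - ε)]

/-- Distribution-transfer inequality: if `ALG` is `α`-hard
against `OPT` in expectation over `D`, `0 ≤ OPT ≤ ALG` and `OPT ≤ C`
pointwise, `E_D[OPT] > 0`, and `D'(ω) ≥ (1-ε)·D(ω)` for all `ω` with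
`ε := E_D[OPT]/(2C)`, then `E_{D'}[ALG] ≥ (α/2)·E_{D'}[OPT]`. -/
theorem distribution_transfer
    {Ω : Type} [Fintype Ω]
    (D D' : Ω → ℝ)
    (hD0 : ∀ ω, 0 ≤ D ω) (hD1 : ∑ ω, D ω = 1)
    (hD'0 : ∀ ω, 0 ≤ D' ω) (hD'1 : ∑ ω, D' ω = 1)
    (ALG OPT : Ω → ℝ) (C : ℝ) (hC : 0 < C)
    (hOPT0 : ∀ ω, 0 ≤ OPT ω)
    (hOPTALG : ∀ ω, OPT ω ≤ ALG ω)
    (hOPTC : ∀ ω, OPT ω ≤ C)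
    (α : ℝ) (hα : 1 ≤ α)
    (hhard : (∑ ω, D ω * ALG ω) ≥ α * ∑ ω, D ω * OPT ω)
    (hpos : 0 < ∑ ω, D ω * OPT ω)
    (hclose : ∀ ω, D' ω ≥ (1 - (∑ ω', D ω' * OPT ω') / (2 * C)) * D ω) :
    (∑ ω, D' ω * ALG ω) ≥ (α / 2) * ∑ ω, D' ω * OPT ω :=
  distribution_transfer_general D D' hD0 hD1 hD'1 ALG OPT C hC hOPT0 hOPTALG hOPTC α hα hhard hclose
end

section
/- Fix an integer n ≥ 1 and a real M > 1. Let B_2, …, B_n be i.i.d. Bernoulli(1/M) random variables and define X_1 := 1 and X_i := M·X_{i-1}·B_i for 2 ≤ i ≤ n. Then: (a) (X_i)_{1≤i≤n} is a martingale with respect to its natural filtration, and for every stopping time τ (with respect to this filtration) taking values in {1, …, n}, E[X_τ] = 1; (b) E[max_{1≤i≤n} X_i] = (n-1)·(1 - 1/M) + 1. Consequently, the ratio of the prophet's expected value E[max_i X_i] to the best achievable expected stopped value equals (n-1)(1 - 1/M) + 1. -/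
/-!
With `X₀ = 1` and `Xᵢ₊₁ = M Xᵢ ωᵢ`, where `E[M ωᵢ] = 1` and `ωᵢ` is independent of
`ω₀, …, ωᵢ₋₁`, each increment `Xᵢ₊₁ - Xᵢ` is orthogonal to every function of the first `i`
coordinates. For a stopping time `τ` the event `{i < τ}` is such a function, so telescoping
`X_τ = X₀ + ∑ᵢ 1{i < τ} (Xᵢ₊₁ - Xᵢ)` gives `E[X_τ] = 1`.

Pathwise, `Xᵢ = Mⁱ` up to the length `K` of the initial run of successes and `0` afterwards, so
`maxᵢ Xᵢ = M^K = 1 + (1 - 1/M) ∑_{i ≥ 1} Xᵢ` by telescoping; `E[Xᵢ] = 1` gives the prophet's value.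
-/

open Finset Function

theorem sum_prod_mul_apply_eq_zero {ι α : Type*} [Fintype ι] [DecidableEq ι] [Fintype α]
    (p : ι → α → ℝ) (i : ι) {g : (ι → α) → ℝ} (hg : DependsOn g {i}ᶜ) {f : α → ℝ}
    (hf : ∑ a, p i a * f a = 0) :
    ∑ ω, (∏ j, p j (ω j)) * g ω * f (ω i) = 0 := by
  set e := Equiv.funSplitAt i α
  rw [← e.symm.sum_comp, Fintype.sum_prod_type, sum_comm]
  refine sum_eq_zero fun r _ => ?_
  rcases isEmpty_or_nonempty α with _ | ⟨⟨a₀⟩⟩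
  · simp
  have hg_split : ∀ a, g (e.symm (a, r)) = g (e.symm (a₀, r)) := fun a =>
    hg fun j hj => by simp [e, show j ≠ i from hj]
  calc ∑ a, (∏ j, p j (e.symm (a, r) j)) * g (e.symm (a, r)) * f (e.symm (a, r) i)
      = ∑ a, ((∏ j : {j // j ≠ i}, p j (r j)) * g (e.symm (a₀, r))) * (p i a * f a) := by
        refine sum_congr rfl fun a _ => ?_
        rw [Fintype.prod_eq_mul_prod_subtype_ne _ i, hg_split]
        simp only [e, Equiv.funSplitAt_symm_apply, ne_eq, fun j : {j // j ≠ i} => j.2, dite_true,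
          dite_false, Subtype.coe_eta]
        ring
    _ = 0 := by rw [← mul_sum, hf, mul_zero]

theorem eq_add_sum_range_ite_sub {G : Type*} [AddCommGroup G] (f : ℕ → G) {k m : ℕ}
    (hk : k ≤ m) : f k = f 0 + ∑ i ∈ range m, if i < k then f (i + 1) - f i else 0 := by
  have hfilter : (range m).filter (· < k) = range k := by
    ext i; simp only [mem_filter, mem_range]; omega
  rw [← sum_filter, hfilter, sum_range_sub, add_sub_cancel]

namespace MultiplicativeChain

variable {m i : ℕ} {M : ℝ}

noncomputable def bernoulliWeight (M : ℝ) (b : Bool) : ℝ := if b then 1 / M else 1 - 1 / M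

noncomputable def prob (M : ℝ) (ω : Fin m → Bool) : ℝ := ∏ j, bernoulliWeight M (ω j)

noncomputable def value (M : ℝ) (i : ℕ) (ω : Fin m → Bool) : ℝ :=
  if ∀ j : Fin m, (j : ℕ) < i → ω j = true then M ^ i else 0

def runLength (ω : Fin m → Bool) : ℕ :=
  Nat.findGreatest (fun i => ∀ j : Fin m, (j : ℕ) < i → ω j = true) m

theorem sum_prob (M : ℝ) : ∑ ω : Fin m → Bool, prob M ω = 1 := by
  simp only [prob]
  rw [← Fintype.prod_sum]
  simp [bernoulliWeight]

theorem dependsOn_forall_lt_eq (y : Fin m → Bool) :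
    DependsOn (fun ω : Fin m → Bool => ∀ j : Fin m, (j : ℕ) < i → ω j = y j)
      {j | (j : ℕ) < i} :=
  fun ω ω' h => propext <| forall_congr' fun j => imp_congr_right fun hj => by rw [h j hj]

theorem dependsOn_value : DependsOn (value (m := m) M i) {j | (j : ℕ) < i} := fun ω ω' h => by
  simp only [value, dependsOn_forall_lt_eq (fun _ => true) h]

theorem value_zero (ω : Fin m → Bool) : value M 0 ω = 1 := by simp [value]

theorem value_succ (hi : i < m) (ω : Fin m → Bool) :
    value M (i + 1) ω = value M i ω * if ω ⟨i, hi⟩ then M else 0 := by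
  have hsucc : (∀ j : Fin m, (j : ℕ) < i + 1 → ω j = true) ↔
      (∀ j : Fin m, (j : ℕ) < i → ω j = true) ∧ ω ⟨i, hi⟩ = true := by
    refine ⟨fun h => ⟨fun j hj => h j (by omega), h _ (by simp)⟩, fun ⟨h, hlast⟩ j hj => ?_⟩
    rcases Nat.lt_succ_iff_lt_or_eq.mp hj with hj | hj
    · exact h j hj
    · rwa [show j = ⟨i, hi⟩ from Fin.ext hj]
  simp only [value, hsucc]
  split_ifs <;> simp_all [pow_succ]

theorem sum_ite_prob_mul_value_sub_eq_zero (hM : M ≠ 0) (hi : i < m)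
    {A : (Fin m → Bool) → Prop} [DecidablePred A] (hA : DependsOn A {j | (j : ℕ) < i}) :
    ∑ ω, (if A ω then prob M ω * (value M (i + 1) ω - value M i ω) else 0) = 0 := by
  have hg : DependsOn (fun ω => if A ω then value M i ω else 0)
      ({(⟨i, hi⟩ : Fin m)}ᶜ : Set (Fin m)) := by
    refine DependsOn.mono (fun j (hj : (j : ℕ) < i) => ?_) fun ω ω' h => ?_
    · simp [Fin.ext_iff, hj.ne]
    · simp only [hA h, dependsOn_value h]
  have hf : ∑ b, bernoulliWeight M b * (if b then M - 1 else -1) = 0 := by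
    simp only [Fintype.sum_bool, bernoulliWeight, if_true, Bool.false_eq_true, if_false]
    field_simp; ring
  refine Eq.trans (sum_congr rfl fun ω _ => ?_)
    (sum_prod_mul_apply_eq_zero (fun _ => bernoulliWeight M) (⟨i, hi⟩ : Fin m) hg hf)
  rw [value_succ hi]
  simp only [prob]
  split_ifs <;> ring

theorem sum_prob_mul_value_stopped (hM : M ≠ 0) (τ : (Fin m → Bool) → ℕ)
    (hτ_le : ∀ ω, τ ω ≤ m) (hτ : ∀ i < m, DependsOn (fun ω => τ ω ≤ i) {j | (j : ℕ) < i}) :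
    ∑ ω, prob M ω * value M (τ ω) ω = 1 := by
  have hlt : ∀ i < m, DependsOn (fun ω => i < τ ω) {j | (j : ℕ) < i} := fun i hi ω ω' h => by
    simpa only [not_le] using congrArg Not (hτ i hi h)
  calc ∑ ω, prob M ω * value M (τ ω) ω
      = ∑ ω, (prob M ω + ∑ i ∈ range m,
          if i < τ ω then prob M ω * (value M (i + 1) ω - value M i ω) else 0) := by
        refine sum_congr rfl fun ω _ => ?_
        rw [eq_add_sum_range_ite_sub (value M · ω) (hτ_le ω), value_zero, mul_add, mul_one,
          mul_sum]
        simp only [mul_ite, mul_zero]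
    _ = ∑ ω, prob M ω + ∑ i ∈ range m, ∑ ω,
          if i < τ ω then prob M ω * (value M (i + 1) ω - value M i ω) else 0 := by
        rw [sum_add_distrib, sum_comm]
    _ = 1 := by
        rw [sum_prob, sum_eq_zero fun i hi => sum_ite_prob_mul_value_sub_eq_zero hM
          (mem_range.1 hi) (hlt i (mem_range.1 hi)), add_zero]

theorem sum_prob_mul_value (hM : M ≠ 0) (hi : i ≤ m) :
    ∑ ω : Fin m → Bool, prob M ω * value M i ω = 1 :=
  sum_prob_mul_value_stopped hM (fun _ => i) (fun _ => hi) fun _ _ _ _ _ => rfl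

theorem runLength_le (ω : Fin m → Bool) : runLength ω ≤ m := Nat.findGreatest_le m

theorem forall_lt_imp_iff_le_runLength {ω : Fin m → Bool} (hi : i ≤ m) :
    (∀ j : Fin m, (j : ℕ) < i → ω j = true) ↔ i ≤ runLength ω := by
  refine ⟨fun h => Nat.le_findGreatest hi h, fun h j hj => ?_⟩
  have hrun : ∀ j : Fin m, (j : ℕ) < runLength ω → ω j = true :=
    Nat.findGreatest_spec (P := fun k => ∀ j : Fin m, (j : ℕ) < k → ω j = true)
      (Nat.zero_le m) fun j hj => absurd hj (Nat.not_lt_zero _)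
  exact hrun j (hj.trans_le h)

theorem value_eq_ite (hi : i ≤ m) (ω : Fin m → Bool) :
    value M i ω = if i ≤ runLength ω then M ^ i else 0 := by
  simp only [value, forall_lt_imp_iff_le_runLength hi]

theorem pow_runLength_eq (hM : M ≠ 0) (ω : Fin m → Bool) :
    M ^ runLength ω = 1 + (1 - 1 / M) * ∑ i ∈ range m, value M (i + 1) ω := by
  rw [eq_add_sum_range_ite_sub (M ^ ·) (runLength_le ω), pow_zero, mul_sum]
  refine congrArg _ (sum_congr rfl fun i hi => ?_)
  simp only [value_eq_ite (mem_range.1 hi), Nat.add_one_le_iff]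
  split_ifs
  · field_simp; ring
  · simp

theorem sum_prob_mul_pow_runLength (hM : M ≠ 0) :
    ∑ ω : Fin m → Bool, prob M ω * M ^ runLength ω = m * (1 - 1 / M) + 1 := by
  calc ∑ ω : Fin m → Bool, prob M ω * M ^ runLength ω
      = ∑ ω, prob M ω + (1 - 1 / M) * ∑ i ∈ range m, ∑ ω, prob M ω * value M (i + 1) ω := by
        simp only [pow_runLength_eq hM, mul_add, mul_one, sum_add_distrib, mul_sum]
        rw [sum_comm]
        congr 1
        exact sum_congr rfl fun i _ => sum_congr rfl fun ω _ => by ring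
    _ = m * (1 - 1 / M) + 1 := by
        rw [sum_prob, sum_congr rfl fun i hi => sum_prob_mul_value (i := i + 1) hM (mem_range.1 hi)]
        rw [sum_const, card_range, nsmul_one]
        ring

theorem sup'_value (hM : 1 ≤ M) {n : ℕ} (h : (univ : Finset (Fin n)).Nonempty)
    (ω : Fin (n - 1) → Bool) :
    univ.sup' h (fun i : Fin n => value M i ω) = M ^ runLength ω := by
  obtain ⟨i₀, -⟩ := h
  have hlt : runLength ω < n := by have := runLength_le ω; have := i₀.isLt; omega
  refine le_antisymm (sup'_le _ _ fun i _ => ?_) (le_sup'_of_le _ (mem_univ ⟨_, hlt⟩) ?_)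
  · rw [value_eq_ite (by omega)]
    split_ifs with hi
    · exact pow_le_pow_right₀ hM hi
    · positivity
  · simp [value_eq_ite (runLength_le ω)]

end MultiplicativeChain

open MultiplicativeChain in
/-- The multiplicative Markov-chain prophet instance:
`X 0 = 1` and `X i = M^i` iff the first `i` i.i.d. Bernoulli(1/M) variables
(encoded as `ω : Fin (n-1) → Bool`) are all successes, and `0` otherwise.
(a) `(X i)` is a martingale with respect to its natural filtration (stated on
the prefix cylinders generating the filtration), and every stopping time `τ`
with values in `{0,…,n-1}` for that filtration has `E[X_τ] = 1`;
(b) `E[maxᵢ Xᵢ] = (n-1)(1 - 1/M) + 1`. Consequently, for every such stopping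
time the ratio of the prophet's expected value to the expected stopped value
equals `(n-1)(1 - 1/M) + 1`. -/
theorem multiplicative_chain_martingale_and_prophet_gap
    (n : ℕ) (hn : 1 ≤ n) (M : ℝ) (hM : 1 < M)
    (P : (Fin (n - 1) → Bool) → ℝ)
    (hP : ∀ ω, P ω = ∏ j : Fin (n - 1), (if ω j then 1 / M else 1 - 1 / M))
    (X : Fin n → (Fin (n - 1) → Bool) → ℝ)
    (hX : ∀ i ω, X i ω =
      if ∀ j : Fin (n - 1), (j : ℕ) < (i : ℕ) → ω j = true then M ^ (i : ℕ) else 0) :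
    -- (a) martingale property over the prefix cylinders of the natural filtration
    (∀ (i : Fin n) (hi : (i : ℕ) + 1 < n) (y : Fin (n - 1) → Bool),
      (∑ ω, if ∀ j : Fin (n - 1), (j : ℕ) < (i : ℕ) → ω j = y j then
          P ω * (X ⟨(i : ℕ) + 1, hi⟩ ω - X i ω) else 0) = 0) ∧
    -- (a) every stopping time obtains expected value exactly 1
    (∀ τ : (Fin (n - 1) → Bool) → Fin n,
      (∀ (i : Fin n) (ω ω' : Fin (n - 1) → Bool),
        (∀ j : Fin (n - 1), (j : ℕ) < (i : ℕ) → ω j = ω' j) →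
        (τ ω ≤ i ↔ τ ω' ≤ i)) →
      (∑ ω, P ω * X (τ ω) ω) = 1) ∧
    -- (b) the prophet's expected value
    (∑ ω, P ω *
        ((Finset.univ.sup'
          (Finset.univ_nonempty_iff.mpr (Fin.pos_iff_nonempty.mp hn))
          (fun i => X i ω))))
      = ((n : ℝ) - 1) * (1 - 1 / M) + 1 ∧
    -- consequently, the prophet-to-algorithm ratio
    (∀ τ : (Fin (n - 1) → Bool) → Fin n,
      (∀ (i : Fin n) (ω ω' : Fin (n - 1) → Bool),
        (∀ j : Fin (n - 1), (j : ℕ) < (i : ℕ) → ω j = ω' j) →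
        (τ ω ≤ i ↔ τ ω' ≤ i)) →
      (∑ ω, P ω *
          ((Finset.univ.sup'
            (Finset.univ_nonempty_iff.mpr (Fin.pos_iff_nonempty.mp hn))
            (fun i => X i ω)))) / (∑ ω, P ω * X (τ ω) ω)
        = ((n : ℝ) - 1) * (1 - 1 / M) + 1) := by
  have hM0 : M ≠ 0 := (one_pos.trans hM).ne'
  obtain rfl : P = prob M := funext hP
  obtain rfl : X = fun (i : Fin n) ω => value M i ω := funext₂ hX
  beta_reduce
  have hstop : ∀ τ : (Fin (n - 1) → Bool) → Fin n,
      (∀ (i : Fin n) ω ω', (∀ j : Fin (n - 1), (j : ℕ) < i → ω j = ω' j) → (τ ω ≤ i ↔ τ ω' ≤ i)) →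
      ∑ ω, prob M ω * value M (τ ω) ω = 1 := fun τ hτ =>
    sum_prob_mul_value_stopped hM0 (fun ω => τ ω) (fun ω => by have := (τ ω).isLt; omega)
      fun i hi ω ω' h => propext (hτ ⟨i, by omega⟩ ω ω' h)
  have hprophet : ∑ ω : Fin (n - 1) → Bool, prob M ω * univ.sup'
      (univ_nonempty_iff.mpr (Fin.pos_iff_nonempty.mp hn)) (fun i : Fin n => value M i ω)
      = ((n : ℝ) - 1) * (1 - 1 / M) + 1 := by
    simp only [sup'_value hM.le, sum_prob_mul_pow_runLength hM0, Nat.cast_sub hn, Nat.cast_one]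
  refine ⟨fun i hi y => ?_, hstop, hprophet, fun τ hτ => by rw [hstop τ hτ, div_one, hprophet]⟩
  exact sum_ite_prob_mul_value_sub_eq_zero hM0 (by omega) (dependsOn_forall_lt_eq y)
end

section
/- Let m ∈ ℕ, p ∈ [0,1], and let z ∈ ℝ with z ≥ 0 and m·p ≥ 2z. If X is a Binomial(m, p) random variable, then E[max{z - X, 0}] ≤ 2. -/
/-!
Chebyshev's inequality in weighted form. With `c = m p ≥ 2 z`, the deficit obeys the pointwise
bound `c · max (z - x) 0 ≤ 2 (c - x)²`, so summing against the binomial weights gives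
`c · E[max (z - X) 0] ≤ 2 Var X = 2 c (1 - p)`, i.e. `E[max (z - X) 0] ≤ 2 (1 - p)` once `c > 0`.
-/

open Finset

theorem binomial_sum_mul_sq_sub_mean (m : ℕ) (p : ℝ) :
    ∑ k ∈ range (m + 1), (m.choose k : ℝ) * p ^ k * (1 - p) ^ (m - k) * ((m : ℝ) * p - k) ^ 2
      = (m : ℝ) * p * (1 - p) := by
  have h := congrArg (Polynomial.eval p) (bernsteinPolynomial.variance ℝ m)
  simp only [Polynomial.eval_finsetSum, Polynomial.eval_mul, Polynomial.eval_pow,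
    Polynomial.eval_sub, Polynomial.eval_X, Polynomial.eval_natCast,
    Polynomial.eval_one, nsmul_eq_mul, bernsteinPolynomial] at h
  rw [← h]
  exact sum_congr rfl fun k _ => by ring

theorem mul_max_sub_le_two_mul_sq {z c : ℝ} (hz : 0 ≤ z) (hzc : 2 * z ≤ c) (x : ℝ) :
    c * max (z - x) 0 ≤ 2 * (c - x) ^ 2 := by
  rcases le_total z x with hzx | hxz
  · rw [max_eq_right (by linarith), mul_zero]
    positivity
  · rw [max_eq_left (by linarith)]
    -- `2 (c - x)² - c (z - x) = (c - x)(c - 2x) + c (c - z)`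
    nlinarith [mul_nonneg (by linarith : 0 ≤ c - x) (by linarith : 0 ≤ c - 2 * x),
      mul_nonneg (by linarith : 0 ≤ c) (by linarith : 0 ≤ c - z)]

/-- If `X ∼ Binomial(m, p)` and `0 ≤ z` with `m·p ≥ 2z`,
then `E[max{z - X, 0}] ≤ 2`, where the expectation is written out via the
binomial probability mass function. -/
theorem binomial_deficit_bound
    (m : ℕ) (p : ℝ) (hp0 : 0 ≤ p) (hp1 : p ≤ 1)
    (z : ℝ) (hz : 0 ≤ z) (hmp : 2 * z ≤ (m : ℝ) * p) :
    (∑ k ∈ Finset.range (m + 1),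
        (m.choose k : ℝ) * p ^ k * (1 - p) ^ (m - k) * max (z - (k : ℝ)) 0) ≤ 2 := by
  rcases hz.eq_or_lt with rfl | hz_pos
  · simp
  set E := ∑ k ∈ range (m + 1),
    (m.choose k : ℝ) * p ^ k * (1 - p) ^ (m - k) * max (z - (k : ℝ)) 0
  have hc : 0 < (m : ℝ) * p := by linarith
  have hchebyshev : (m : ℝ) * p * E ≤ (m : ℝ) * p * (2 * (1 - p)) := by
    rw [mul_left_comm, ← binomial_sum_mul_sq_sub_mean, mul_sum, mul_sum]
    refine sum_le_sum fun k _ => ?_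
    have hw : 0 ≤ (m.choose k : ℝ) * p ^ k * (1 - p) ^ (m - k) := by
      have : 0 ≤ 1 - p := by linarith
      positivity
    nlinarith [mul_le_mul_of_nonneg_left (mul_max_sub_le_two_mul_sq hz hmp k) hw]
  calc E ≤ 2 * (1 - p) := le_of_mul_le_mul_left hchebyshev hc
    _ ≤ 2 := by linarith
end

section
/- Let Ω' be a finite nonempty set with |Ω'| = m, let p : Ω' → ℝ_{≥0} satisfy ∑_{t∈Ω'} p(t) = 1, let Δ ≥ 0, and define q(t) := max{p(t), e^{-Δ/2}}. Then for every t ∈ Ω': q(t)/∑_{u∈Ω'} q(u) ≥ (1 - m·e^{-Δ/2})·p(t). -/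
/-!
Truncating at `c = e^{-Δ/2}` raises each weight by at most `c`, so the normalising sum
`∑ max (p u) c` is at most `1 + m c`, while the numerator is at least `p t`. Hence the
softmax probability is at least `p t / (1 + m c) ≥ (1 - m c) p t`.
-/

open Finset

lemma sum_max_le_sum_add_card_mul {ι : Type*} (s : Finset ι) {p : ι → ℝ}
    (hp : ∀ i ∈ s, 0 ≤ p i) {c : ℝ} (hc : 0 ≤ c) :
    ∑ i ∈ s, max (p i) c ≤ ∑ i ∈ s, p i + #s * c :=
  calc ∑ i ∈ s, max (p i) c ≤ ∑ i ∈ s, (p i + c) :=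
        sum_le_sum fun i hi => max_le_add_of_nonneg (hp i hi) hc
    _ = ∑ i ∈ s, p i + #s * c := by rw [sum_add_distrib, sum_const, nsmul_eq_mul]

lemma one_sub_mul_le_div_one_add {x a : ℝ} (hx : 0 ≤ x) (ha : 0 ≤ a) :
    (1 - x) * a ≤ a / (1 + x) := by
  rw [le_div_iff₀ (by linarith)]
  nlinarith [mul_nonneg (sq_nonneg x) ha]

lemma div_one_add_card_mul_le_max_div_sum_max {ι : Type*} [Fintype ι] {p : ι → ℝ}
    (hp0 : ∀ i, 0 ≤ p i) (hp1 : ∑ i, p i = 1) {c : ℝ} (hc : 0 < c) (t : ι) :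
    p t / (1 + Fintype.card ι * c) ≤ max (p t) c / ∑ u, max (p u) c := by
  have hsum_pos : 0 < ∑ u, max (p u) c :=
    (hc.trans_le (le_max_right _ _)).trans_le <|
      single_le_sum (fun u _ => (hp0 u).trans (le_max_left _ c)) (mem_univ t)
  have hsum_le : ∑ u, max (p u) c ≤ 1 + Fintype.card ι * c := by
    simpa only [hp1, card_univ] using
      sum_max_le_sum_add_card_mul univ (fun i _ => hp0 i) hc.le
  exact div_le_div₀ ((hp0 t).trans (le_max_left _ _)) (le_max_left _ _) hsum_pos hsum_le

theorem truncated_softmax_domination_general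
    {Ω' : Type} [Fintype Ω']
    (m : ℕ) (hm : Fintype.card Ω' = m)
    (p : Ω' → ℝ) (hp0 : ∀ t, 0 ≤ p t) (hp1 : ∑ t, p t = 1)
    (Δ : ℝ)
    (q : Ω' → ℝ) (hq : ∀ t, q t = max (p t) (Real.exp (-(Δ / 2)))) :
    ∀ t, q t / (∑ u, q u) ≥ (1 - (m : ℝ) * Real.exp (-(Δ / 2))) * p t := by
  intro t
  obtain rfl : q = fun u => max (p u) (Real.exp (-(Δ / 2))) := funext hq
  subst hm
  calc (1 - Fintype.card Ω' * Real.exp (-(Δ / 2))) * p t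
      ≤ p t / (1 + Fintype.card Ω' * Real.exp (-(Δ / 2))) :=
        one_sub_mul_le_div_one_add (by positivity) (hp0 t)
    _ ≤ _ := div_one_add_card_mul_le_max_div_sum_max hp0 hp1 (Real.exp_pos _) t

/-- Softmax domination for truncated potentials: if `p` is a
probability mass function on a finite set `Ω'` of size `m` and
`q(t) = max{p(t), e^{-Δ/2}}`, then for every `t`,
`q(t)/∑_u q(u) ≥ (1 - m·e^{-Δ/2})·p(t)`. -/
theorem truncated_softmax_domination
    {Ω' : Type} [Fintype Ω'] [Nonempty Ω']
    (m : ℕ) (hm : Fintype.card Ω' = m)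
    (p : Ω' → ℝ) (hp0 : ∀ t, 0 ≤ p t) (hp1 : ∑ t, p t = 1)
    (Δ : ℝ) (hΔ : 0 ≤ Δ)
    (q : Ω' → ℝ) (hq : ∀ t, q t = max (p t) (Real.exp (-(Δ / 2)))) :
    ∀ t, q t / (∑ u, q u) ≥ (1 - (m : ℝ) * Real.exp (-(Δ / 2))) * p t :=
  truncated_softmax_domination_general m hm p hp0 hp1 Δ q hq
end

section
/- Fix an integer n ≥ 1 and reals M > 1 and p ∈ [0,1]. Let B_2, …, B_n be i.i.d. Bernoulli(1/M), define X_1 := 1 and X_i := M·X_{i-1}·B_i for 2 ≤ i ≤ n, and let Z_1, …, Z_n be i.i.d. Bernoulli(p) random variables independent of (B_2, …, B_n). Then E[max_{1≤i≤n} Z_i·X_i] ≤ p·n. -/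
/-!
Every `Zᵢ·Xᵢ` is nonnegative, so the maximum is at most the sum `∑ᵢ Zᵢ·Xᵢ`. The sampling
indicators are independent of the chain, so `E[Zᵢ·Xᵢ] = E[Zᵢ]·E[Xᵢ] = p·1`: the chain reaches
`Xᵢ = Mⁱ` exactly when its first `i` coin flips succeed, which has probability `M⁻ⁱ`.
-/

open Finset

section BernoulliProduct

variable {ι : Type*} [Fintype ι]

theorem prod_bernoulli_nonneg {q : ℝ} (hq0 : 0 ≤ q) (hq1 : q ≤ 1) (ω : ι → Bool) :
    0 ≤ ∏ j, (if ω j then q else 1 - q) :=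
  prod_nonneg fun j _ => by split <;> linarith

variable [DecidableEq ι]

theorem sum_prod_bernoulli_mul_prod (q : ℝ) (g : ι → Bool → ℝ) :
    ∑ ω : ι → Bool, (∏ j, (if ω j then q else 1 - q)) * ∏ j, g j (ω j) =
      ∏ j, (q * g j true + (1 - q) * g j false) := by
  calc _ = ∏ j, ∑ b : Bool, (if b then q else 1 - q) * g j b := by
        rw [Fintype.prod_sum]; simp_rw [prod_mul_distrib]
    _ = _ := by simp

theorem sum_prod_bernoulli_mul_prod_indicator (q : ℝ) (s : Finset ι) :
    ∑ ω : ι → Bool, (∏ j, (if ω j then q else 1 - q)) * ∏ j ∈ s, (if ω j then 1 else 0) =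
      q ^ #s := by
  simp_rw [← Fintype.prod_ite_mem s]
  refine (sum_prod_bernoulli_mul_prod q
    fun j b => if j ∈ s then (if b then 1 else 0) else 1).trans ?_
  calc ∏ j, (q * (if j ∈ s then (if true then 1 else 0) else 1) +
        (1 - q) * (if j ∈ s then (if false then 1 else 0) else 1))
      = ∏ j, if j ∈ s then q else 1 :=
        prod_congr rfl fun j _ => by by_cases hj : j ∈ s <;> simp [hj]
    _ = q ^ #s := by rw [Fintype.prod_ite_mem, prod_const]

theorem sum_prod_bernoulli_inv_mul_chain_eq_one {m i : ℕ} (hi : i ≤ m) {M : ℝ} (hM : M ≠ 0) :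
    ∑ ω : Fin m → Bool, (∏ j, (if ω j then 1 / M else 1 - 1 / M)) *
        (if ∀ j : Fin m, (j : ℕ) < i → ω j = true then M ^ i else 0) = 1 := by
  have hcard : #{j : Fin m | (j : ℕ) < i} = i := by
    rw [Fin.card_filter_val_lt]; omega
  calc _ = M ^ i * ∑ ω : Fin m → Bool, (∏ j, (if ω j then 1 / M else 1 - 1 / M)) *
        ∏ j ∈ ({j : Fin m | (j : ℕ) < i} : Finset (Fin m)), (if ω j then 1 else 0) := by
        rw [mul_sum]
        refine sum_congr rfl fun ω _ => ?_
        rw [prod_boole]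
        simp only [mem_filter, mem_univ, true_and]
        split_ifs <;> ring
    _ = M ^ i * (1 / M) ^ i := by rw [sum_prod_bernoulli_mul_prod_indicator, hcard]
    _ = 1 := by rw [← mul_pow, mul_one_div_cancel hM, one_pow]

end BernoulliProduct

theorem sup'_le_sum_of_nonneg {ι α : Type*} [AddCommMonoid α] [LinearOrder α]
    [IsOrderedAddMonoid α] {s : Finset ι} (hs : s.Nonempty) {f : ι → α}
    (hf : ∀ i ∈ s, 0 ≤ f i) : s.sup' hs f ≤ ∑ i ∈ s, f i :=
  sup'_le hs f fun _ hi => single_le_sum hf hi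

theorem sum_sum_mul_mul_sum_eq {α β ι : Type*} [Fintype α] [Fintype β] (s : Finset ι)
    (u : α → ℝ) (v : β → ℝ) (f : β → ι → ℝ) (g : ι → α → ℝ) :
    ∑ a, ∑ b, u a * v b * ∑ i ∈ s, f b i * g i a =
      ∑ i ∈ s, (∑ b, v b * f b i) * ∑ a, u a * g i a := by
  simp only [mul_sum, sum_mul]
  rw [sum_comm_cycle]
  exact sum_congr rfl fun _ _ => sum_congr rfl fun _ _ => sum_congr rfl fun _ _ => by ring

/-- For the multiplicative Markov-chain instance
(`X 0 = 1`, `X i = M^i` iff the first `i` i.i.d. Bernoulli(1/M) variables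
`ω : Fin (n-1) → Bool` all succeed, else `0`) and independent i.i.d.
Bernoulli(p) sampling indicators `ζ : Fin n → Bool`, the expected maximum of
the sampled values satisfies `E[maxᵢ ζᵢ·Xᵢ] ≤ p·n`. -/
theorem p_sample_prophet_value_bound
    (n : ℕ) (hn : 1 ≤ n) (M : ℝ) (hM : 1 < M)
    (p : ℝ) (hp0 : 0 ≤ p) (hp1 : p ≤ 1)
    (X : Fin n → (Fin (n - 1) → Bool) → ℝ)
    (hX : ∀ i ω, X i ω =
      if ∀ j : Fin (n - 1), (j : ℕ) < (i : ℕ) → ω j = true then M ^ (i : ℕ) else 0) :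
    (∑ ω : Fin (n - 1) → Bool, ∑ ζ : Fin n → Bool,
        (∏ j : Fin (n - 1), (if ω j then 1 / M else 1 - 1 / M)) *
        (∏ i : Fin n, (if ζ i then p else 1 - p)) *
        (Finset.univ.sup'
          (Finset.univ_nonempty_iff.mpr (Fin.pos_iff_nonempty.mp hn))
          (fun i => (if ζ i then (1 : ℝ) else 0) * X i ω)))
      ≤ p * n := by
  have hM0 : 0 < M := zero_lt_one.trans hM
  have hX0 : ∀ i ω, 0 ≤ X i ω := fun i ω => by rw [hX]; split <;> positivity
  have hZ : ∀ i : Fin n, ∑ ζ : Fin n → Bool, (∏ i', if ζ i' then p else 1 - p) *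
      (if ζ i then (1 : ℝ) else 0) = p := fun i => by
    simpa using sum_prod_bernoulli_mul_prod_indicator p {i}
  have hEX : ∀ i : Fin n, ∑ ω : Fin (n - 1) → Bool,
      (∏ j, if ω j then 1 / M else 1 - 1 / M) * X i ω = 1 := fun i => by
    simp_rw [hX]
    exact sum_prod_bernoulli_inv_mul_chain_eq_one (by omega) hM0.ne'
  calc _ ≤ ∑ ω : Fin (n - 1) → Bool, ∑ ζ : Fin n → Bool,
        (∏ j, (if ω j then 1 / M else 1 - 1 / M)) * (∏ i, (if ζ i then p else 1 - p)) *
        ∑ i, (if ζ i then (1 : ℝ) else 0) * X i ω := by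
        gcongr with ω _ ζ _
        · exact mul_nonneg (prod_bernoulli_nonneg (by positivity) (by bound) ω)
            (prod_bernoulli_nonneg hp0 hp1 ζ)
        · exact sup'_le_sum_of_nonneg _ fun i _ => mul_nonneg (by split <;> norm_num) (hX0 i ω)
    _ = ∑ i, (∑ ζ : Fin n → Bool, (∏ i', if ζ i' then p else 1 - p) *
          (if ζ i then (1 : ℝ) else 0)) *
        ∑ ω : Fin (n - 1) → Bool, (∏ j, if ω j then 1 / M else 1 - 1 / M) * X i ω :=
        sum_sum_mul_mul_sum_eq ..
    _ = p * n := by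
        simp only [hZ, hEX, mul_one, sum_const, card_univ, Fintype.card_fin, nsmul_eq_mul]
        ring
end
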